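/- Let X be an irreducible birth-and-death chain on ⟦b,a⟧ with transition probabilities p_x, q_x and reversible invariant probability measure π. Then for all integers b ≤ j < n ≤ a: E[T_{j→n}] = Σ_{k=j}^{n−1} π(⟦b,k⟧) / ( p_k · π(k) ). -/

import Mathlib

open MeasureTheory Filter Topology ENNReal ProbabilityTheory

noncomputable section

/-- First time `t ≥ 0` at which the path `ω` visits the set `A`,
with value `⊤` if the path never visits `A`. -/
def hitTime {S : Type*} (A : Set S) (ω : ℕ → S) : ℝ≥0∞ :=
  ⨅ (t : ℕ) (_ : ω t ∈ A), (t : ℝ≥0∞)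

/-- First time `t > 0` at which the path `ω` visits the set `A`. -/
def hitTimePos {S : Type*} (A : Set S) (ω : ℕ → S) : ℝ≥0∞ :=
  ⨅ (t : ℕ) (_ : 0 < t) (_ : ω t ∈ A), (t : ℝ≥0∞)

/-- First time `t ≥ r` at which the path `ω` visits the set `A`. -/
def hitTimeAfter {S : Type*} (A : Set S) (r : ℝ≥0∞) (ω : ℕ → S) : ℝ≥0∞ :=
  ⨅ (t : ℕ) (_ : r ≤ (t : ℝ≥0∞)) (_ : ω t ∈ A), (t : ℝ≥0∞)

/-- One-step transition probabilities of a birth-and-death chain on `ℤ` with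
birth rates `p` and death rates `q` (and holding probability `1 - p x - q x`). -/
def bdStep (p q : ℤ → ℝ) (x y : ℤ) : ℝ :=
  if y = x + 1 then p x else if y = x - 1 then q x
  else if y = x then 1 - p x - q x else 0

/-- An irreducible discrete-time birth-and-death chain on the integer interval
`⟦b,a⟧`, given by its transition probabilities `p x = p(x,x+1) > 0` (for `b ≤ x ≤ a-1`),
`q x = p(x,x-1) > 0` (for `b+1 ≤ x ≤ a`), and by the laws `law x` of the chain started
at `x` on path space `ℕ → ℤ` (characterized by the cylinder/Markov property `markov`). -/
structure BDChain (b a : ℤ) where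
  p : ℤ → ℝ
  q : ℤ → ℝ
  law : ℤ → Measure (ℕ → ℤ)
  prob : ∀ x, IsProbabilityMeasure (law x)
  p_pos : ∀ x, b ≤ x → x ≤ a - 1 → 0 < p x
  q_pos : ∀ x, b + 1 ≤ x → x ≤ a → 0 < q x
  p_zero : ∀ x, x < b ∨ a ≤ x → p x = 0
  q_zero : ∀ x, x ≤ b ∨ a < x → q x = 0
  r_nonneg : ∀ x, b ≤ x → x ≤ a → p x + q x ≤ 1
  init : ∀ x, law x {ω | ω 0 = x} = 1
  markov : ∀ (x : ℤ) (u : ℕ → ℤ) (n : ℕ),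
    law x {ω | ∀ i ≤ n + 1, ω i = u i}
      = law x {ω | ∀ i ≤ n, ω i = u i} * ENNReal.ofReal (bdStep p q (u n) (u (n + 1)))

/-- Mean hitting time `E[T_{x → y}]` for the birth-and-death chain `c`. -/
def BDChain.eT {b a : ℤ} (c : BDChain b a) (x y : ℤ) : ℝ≥0∞ :=
  ∫⁻ ω, hitTime {y} ω ∂(c.law x)

/-- Mean hitting time `E[T_{x → A}]` of a set `A` for the birth-and-death chain `c`. -/
def BDChain.eTset {b a : ℤ} (c : BDChain b a) (x : ℤ) (A : Set ℤ) : ℝ≥0∞ :=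
  ∫⁻ ω, hitTime A ω ∂(c.law x)

/-- Second moment `E[T_{x → y}²]` of the hitting time. -/
def BDChain.eT2 {b a : ℤ} (c : BDChain b a) (x y : ℤ) : ℝ≥0∞ :=
  ∫⁻ ω, (hitTime {y} ω) ^ 2 ∂(c.law x)

/-- `π` is the (unique) reversible invariant probability measure of the
birth-and-death chain `c` on `⟦b,a⟧`: it is positive on `⟦b,a⟧`, vanishes outside,
has total mass one, and satisfies the reversibility (detailed balance) relation
`π(x) q_x = π(x-1) p_{x-1}`. -/
def BDChain.IsStationary {b a : ℤ} (c : BDChain b a) (π : ℤ → ℝ) : Prop :=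
  (∀ x, b ≤ x → x ≤ a → 0 < π x) ∧ (∀ x, x < b ∨ a < x → π x = 0) ∧
  (∑ x ∈ Finset.Icc b a, π x) = 1 ∧
  (∀ x, b + 1 ≤ x → x ≤ a → π x * c.q x = π (x - 1) * c.p (x - 1))

/-!
Write `h x = E[T_{x→n}]`. The tail-sum formula `h x = ∑ₜ P_x(T > t)` and first-step analysis
give `h = 1 + P h` on `⟦b, n - 1⟧` with `h n = 0`, where `P` is the transition operator.
By detailed balance, `Φ x = ∑_{k=x}^{n-1} π⟦b,k⟧ / (p_k π_k)` solves the same equation, so the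
partial sums of the tail series stay below `Φ` and `h` is finite. The difference `D = Φ - h` then
satisfies `p_x (D(x+1) - D x) = q_x (D x - D(x-1))`; as `q_b = 0` it is constant on `⟦b, n⟧`,
hence zero.
-/

namespace PathSpace

variable {α : Type*}

def prefixCylinder (u : ℕ → α) (m : ℕ) : Set (ℕ → α) := {ω | ∀ i ≤ m, ω i = u i}

variable (α) in
def prefixCylinders : Set (Set (ℕ → α)) :=
  {S | ∃ u m, S = prefixCylinder u m}

def shift (ω : ℕ → α) : ℕ → α := fun k => ω (k + 1)

def cons (x : α) (ω : ℕ → α) : ℕ → α := fun k => Nat.casesOn k x ω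

lemma mem_prefixCylinder {ω u : ℕ → α} {m : ℕ} :
    ω ∈ prefixCylinder u m ↔ ∀ i ≤ m, ω i = u i := Iff.rfl

@[simp] lemma shift_apply (ω : ℕ → α) (k : ℕ) : shift ω k = ω (k + 1) := rfl

@[simp] lemma cons_zero (x : α) (ω : ℕ → α) : cons x ω 0 = x := rfl

@[simp] lemma cons_succ (x : α) (ω : ℕ → α) (k : ℕ) : cons x ω (k + 1) = ω k := rfl

lemma prefixCylinder_zero (u : ℕ → α) : prefixCylinder u 0 = {ω | ω 0 = u 0} := by
  simp [prefixCylinder]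

lemma setOf_apply_zero_inter_preimage_shift (x : α) (v : ℕ → α) (k : ℕ) :
    {ω | ω 0 = x} ∩ shift ⁻¹' prefixCylinder v k = prefixCylinder (cons x v) (k + 1) := by
  ext ω
  simp only [prefixCylinder, Set.mem_inter_iff, Set.mem_ofPred_eq, Set.mem_preimage, shift_apply]
  constructor
  · rintro ⟨h0, hv⟩ (_ | i) hi
    · exact h0
    · exact hv i (by omega)
  · intro h
    exact ⟨h 0 (Nat.zero_le _), fun i hi => h (i + 1) (by omega)⟩

lemma isPiSystem_prefixCylinders : IsPiSystem (prefixCylinders α) := by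
  rintro _ ⟨u, m, rfl⟩ _ ⟨v, k, rfl⟩ ⟨ω, hωu, hωv⟩
  wlog hmk : m ≤ k generalizing u v m k
  · rw [Set.inter_comm]; exact this v k u m hωv hωu (by omega)
  refine ⟨v, k, Set.inter_eq_right.2 fun ω' hω' i hi => ?_⟩
  rw [hω' i (hi.trans hmk), ← hωv i (hi.trans hmk), hωu i hi]

def avoidUntil (z : α) (t : ℕ) : Set (ℕ → α) := {ω | ∀ i ≤ t, ω i ≠ z}

lemma mem_avoidUntil {z : α} {t : ℕ} {ω : ℕ → α} : ω ∈ avoidUntil z t ↔ ∀ i ≤ t, ω i ≠ z :=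
  Iff.rfl

lemma avoidUntil_succ (z : α) (t : ℕ) :
    avoidUntil z (t + 1) = {ω | ω 0 ≠ z} ∩ shift ⁻¹' avoidUntil z t := by
  ext ω
  simp only [avoidUntil, Set.mem_inter_iff, Set.mem_ofPred_eq, Set.mem_preimage, shift_apply]
  constructor
  · intro h
    exact ⟨h 0 (Nat.zero_le _), fun i hi => h (i + 1) (by omega)⟩
  · rintro ⟨h0, h⟩ (_ | i) hi
    · exact h0
    · exact h i (by omega)

lemma hitTime_singleton_eq_tsum (z : α) (ω : ℕ → α) :
    hitTime {z} ω = ∑' t, (avoidUntil z t).indicator 1 ω := by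
  by_cases hhit : ∃ s, ω s = z
  · classical
    have hfirst : hitTime {z} ω = Nat.find hhit :=
      le_antisymm (iInf₂_le (f := fun t (_ : ω t ∈ ({z} : Set α)) => (t : ℝ≥0∞)) _
        (Nat.find_spec hhit))
        (le_iInf₂ fun t ht => Nat.cast_le.2 (Nat.find_le ht))
    have hind : ∀ t, (avoidUntil z t).indicator 1 ω =
        if t < Nat.find hhit then (1 : ℝ≥0∞) else 0 := by
      intro t
      by_cases ht : t < Nat.find hhit
      · have hω : ω ∈ avoidUntil z t := fun i hi => Nat.find_min hhit (by omega)
        rw [if_pos ht, Set.indicator_of_mem hω, Pi.one_apply]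
      · have hω : ω ∉ avoidUntil z t := fun hω => hω _ (by omega) (Nat.find_spec hhit)
        rw [if_neg ht, Set.indicator_of_notMem hω]
    rw [hfirst, tsum_congr hind, tsum_eq_sum (s := Finset.range (Nat.find hhit)) (by simp),
      Finset.sum_ite_of_true fun t ht => Finset.mem_range.1 ht]
    simp
  · push Not at hhit
    have hnever : hitTime {z} ω = ⊤ := by simp [hitTime, hhit]
    rw [hnever, tsum_congr fun t =>
      Set.indicator_of_mem (mem_avoidUntil.2 fun i _ => hhit i) _]
    exact (ENNReal.tsum_const_eq_top_of_ne_zero one_ne_zero).symm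

variable [MeasurableSpace α]

lemma measurable_shift : Measurable (shift : (ℕ → α) → ℕ → α) :=
  measurable_pi_lambda _ fun k => measurable_pi_apply (k + 1)

variable [MeasurableSingletonClass α]

lemma measurableSet_setOf_apply_eq (i : ℕ) (x : α) : MeasurableSet {ω : ℕ → α | ω i = x} :=
  (measurableSet_singleton x).preimage (measurable_pi_apply i)

lemma measurableSet_prefixCylinder (u : ℕ → α) (m : ℕ) :
    MeasurableSet (prefixCylinder u m) := by
  have : prefixCylinder u m = ⋂ i ∈ Set.Iic m, {ω | ω i = u i} := by
    ext ω; simp [prefixCylinder]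
  rw [this]
  exact .biInter (Set.to_countable _) fun i _ => measurableSet_setOf_apply_eq i (u i)

lemma generateFrom_prefixCylinders [Countable α] :
    MeasurableSpace.generateFrom (prefixCylinders α) = MeasurableSpace.pi := by
  refine le_antisymm (MeasurableSpace.generateFrom_le ?_) ?_
  · rintro _ ⟨u, m, rfl⟩
    exact measurableSet_prefixCylinder u m
  refine iSup_le fun i => Measurable.comap_le
    (@measurable_to_countable' _ _ _ _ (.generateFrom _) (fun ω : ℕ → α => ω i) fun z => ?_)
  have : (fun ω : ℕ → α => ω i) ⁻¹' {z} =
      ⋃ v : Fin i → α, prefixCylinder (fun k => if h : k < i then v ⟨k, h⟩ else z) i := by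
    ext ω
    simp only [Set.mem_preimage, Set.mem_singleton_iff, Set.mem_iUnion, prefixCylinder,
      Set.mem_ofPred_eq]
    refine ⟨fun hω => ⟨fun k => ω k, fun k hk => ?_⟩, fun ⟨v, hv⟩ => by simpa using hv i le_rfl⟩
    split_ifs with h
    · rfl
    · rw [show k = i by omega, hω]
  rw [this]
  exact .iUnion fun v => MeasurableSpace.measurableSet_generateFrom ⟨_, i, rfl⟩

lemma measurableSet_avoidUntil (z : α) (t : ℕ) : MeasurableSet (avoidUntil z t) := by
  have : avoidUntil z t = ⋂ i ∈ Set.Iic t, {ω | ω i = z}ᶜ := by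
    ext ω; simp [avoidUntil]
  rw [this]
  exact .biInter (Set.to_countable _) fun i _ => (measurableSet_setOf_apply_eq i z).compl

lemma lintegral_hitTime_singleton (μ : Measure (ℕ → α)) (z : α) :
    ∫⁻ ω, hitTime {z} ω ∂μ = ∑' t, μ (avoidUntil z t) := by
  simp_rw [hitTime_singleton_eq_tsum]
  rw [lintegral_tsum fun t =>
    (measurable_one.indicator (measurableSet_avoidUntil z t)).aemeasurable]
  exact tsum_congr fun t => lintegral_indicator_one (measurableSet_avoidUntil z t)

end PathSpace

def FirstStepEq (p q : ℤ → ℝ) (b n : ℤ) (F : ℤ → ℝ) : Prop :=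
  ∀ x, b ≤ x → x < n → F x = 1 + p x * F (x + 1) + q x * F (x - 1) + (1 - p x - q x) * F x

/-- The difference of two solutions is `p`-`q`-harmonic; as `q b = 0` its increments vanish
from the left end on, so it is constant on `⟦b, n⟧`. -/
theorem FirstStepEq.unique {p q F G : ℤ → ℝ} {b n : ℤ} (hF : FirstStepEq p q b n F)
    (hG : FirstStepEq p q b n G) (hqb : q b = 0) (hp : ∀ x, b ≤ x → x < n → p x ≠ 0)
    (hn : F n = G n) {x : ℤ} (hbx : b ≤ x) (hxn : x ≤ n) : F x = G x := by
  have hstep : ∀ y, b ≤ y → y < n → F (y + 1) - G (y + 1) = F y - G y := by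
    intro y hby
    induction y, hby using Int.leInduction with
    | base =>
      intro hbn
      refine mul_left_cancel₀ (hp b le_rfl hbn) ?_
      linear_combination
        hG b le_rfl hbn - hF b le_rfl hbn + (F b - G b - F (b - 1) + G (b - 1)) * hqb
    | succ y hby ih =>
      intro hyn
      refine mul_left_cancel₀ (hp (y + 1) (by omega) hyn) ?_
      have h₁ := hF (y + 1) (by omega) hyn
      have h₂ := hG (y + 1) (by omega) hyn
      simp only [add_sub_cancel_right] at h₁ h₂
      linear_combination h₂ - h₁ + q (y + 1) * ih (by omega)
  have hconst : ∀ y, b ≤ y → y ≤ n → F y - G y = F b - G b := by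
    intro y hby
    induction y, hby using Int.leInduction with
    | base => intro _; rfl
    | succ y hby ih => intro hyn; rw [hstep y hby (by omega), ih (by omega)]
  linarith [hconst x hbx hxn, hconst n (hbx.trans hxn) le_rfl]

lemma tsum_ofReal_bdStep_mul (p q : ℤ → ℝ) (F : ℤ → ℝ≥0∞) (x : ℤ) :
    ∑' y, ENNReal.ofReal (bdStep p q x y) * F y =
      ENNReal.ofReal (p x) * F (x + 1) + ENNReal.ofReal (q x) * F (x - 1) +
        ENNReal.ofReal (1 - p x - q x) * F x := by
  have h₁ : x + 1 ≠ x - 1 := by omega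
  have h₂ : x + 1 ≠ x := by omega
  have h₃ : x - 1 ≠ x := by omega
  rw [tsum_eq_sum (s := {x + 1, x - 1, x}) fun y hy => ?_]
  · rw [Finset.sum_insert (by simp [h₁, h₂]), Finset.sum_insert (by simp [h₃]),
      Finset.sum_singleton]
    simp [bdStep, h₁.symm, h₂.symm, h₃.symm, add_assoc]
  · simp only [Finset.mem_insert, Finset.mem_singleton, not_or] at hy
    simp [bdStep, hy.1, hy.2.1, hy.2.2]

namespace BDChain

open PathSpace

variable {b a : ℤ} (c : BDChain b a)

instance (x : ℤ) : IsProbabilityMeasure (c.law x) := c.prob x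

lemma p_nonneg (x : ℤ) : 0 ≤ c.p x := by
  by_cases hx : b ≤ x ∧ x ≤ a - 1
  · exact (c.p_pos x hx.1 hx.2).le
  · rw [c.p_zero x (by omega)]

lemma q_nonneg (x : ℤ) : 0 ≤ c.q x := by
  by_cases hx : b + 1 ≤ x ∧ x ≤ a
  · exact (c.q_pos x hx.1 hx.2).le
  · rw [c.q_zero x (by omega)]

lemma law_compl_setOf_apply_zero (x : ℤ) : c.law x {ω | ω 0 = x}ᶜ = 0 :=
  (prob_compl_eq_zero_iff (measurableSet_setOf_apply_eq 0 x)).2 (c.init x)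

lemma law_prefixCylinder (x : ℤ) (u : ℕ → ℤ) (m : ℕ) :
    c.law x (prefixCylinder u m) = (if u 0 = x then 1 else 0) *
      ∏ i ∈ Finset.range m, ENNReal.ofReal (bdStep c.p c.q (u i) (u (i + 1))) := by
  induction m with
  | zero =>
    rw [prefixCylinder_zero, Finset.prod_range_zero, mul_one]
    split_ifs with h
    · rw [h]; exact c.init x
    · exact measure_mono_null (fun ω (hω : ω 0 = u 0) hωx => h (hω ▸ hωx))
        (c.law_compl_setOf_apply_zero x)
  | succ m ih =>
    rw [prefixCylinder, c.markov, ← prefixCylinder, ih, Finset.prod_range_succ, mul_assoc]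

lemma law_preimage_shift_prefixCylinder (x : ℤ) (v : ℕ → ℤ) (k : ℕ) :
    c.law x (shift ⁻¹' prefixCylinder v k) =
      ENNReal.ofReal (bdStep c.p c.q x (v 0)) * c.law (v 0) (prefixCylinder v k) := by
  rw [← measure_inter_conull (c.law_compl_setOf_apply_zero x), Set.inter_comm,
    setOf_apply_zero_inter_preimage_shift, law_prefixCylinder, law_prefixCylinder,
    Finset.prod_range_succ']
  simp [mul_comm]

/-- The Markov property at time one. -/
theorem map_shift_restrict (x y : ℤ) :
    ((c.law x).map shift).restrict {ω | ω 0 = y} =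
      ENNReal.ofReal (bdStep c.p c.q x y) • c.law y := by
  refine ext_of_generate_finite _ generateFrom_prefixCylinders.symm isPiSystem_prefixCylinders
    ?_ ?_
  · rintro _ ⟨v, k, rfl⟩
    rw [Measure.restrict_apply (measurableSet_prefixCylinder v k),
      Measure.map_apply measurable_shift
        ((measurableSet_prefixCylinder v k).inter (measurableSet_setOf_apply_eq 0 y)),
      Measure.smul_apply, smul_eq_mul]
    by_cases hv : v 0 = y
    · subst hv
      rw [show prefixCylinder v k ∩ {ω | ω 0 = v 0} = prefixCylinder v k from
        Set.inter_eq_left.2 fun ω hω => mem_prefixCylinder.1 hω 0 k.zero_le,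
        law_preimage_shift_prefixCylinder]
    · have : prefixCylinder v k ∩ {ω | ω 0 = y} = ∅ :=
        Set.eq_empty_of_forall_notMem fun ω hω => hv (hω.1 0 k.zero_le ▸ hω.2)
      rw [this, law_prefixCylinder, if_neg hv]
      simp
  · have h := c.law_preimage_shift_prefixCylinder x (fun _ => y) 0
    rw [law_prefixCylinder, prefixCylinder_zero] at h
    rw [Measure.restrict_apply_univ, Measure.map_apply measurable_shift
      (measurableSet_setOf_apply_eq 0 y), h]
    simp

def transition (F : ℤ → ℝ≥0∞) (x : ℤ) : ℝ≥0∞ :=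
  ENNReal.ofReal (c.p x) * F (x + 1) + ENNReal.ofReal (c.q x) * F (x - 1) +
    ENNReal.ofReal (1 - c.p x - c.q x) * F x

theorem law_preimage_shift (x : ℤ) {A : Set (ℕ → ℤ)} (hA : MeasurableSet A) :
    c.law x (shift ⁻¹' A) = c.transition (fun y => c.law y A) x := by
  have hfib : (⋃ y : ℤ, (fun ω : ℕ → ℤ => ω 0) ⁻¹' {y}) = Set.univ := by
    ext ω; simp
  rw [← Measure.map_apply measurable_shift hA, ← Measure.restrict_univ (μ := Measure.map _ _),
    ← hfib, Measure.restrict_iUnion_apply (pairwise_disjoint_fiber fun ω : ℕ → ℤ => ω 0)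
      (measurableSet_setOf_apply_eq 0 ·) hA, transition,
    ← tsum_ofReal_bdStep_mul c.p c.q (fun y => c.law y A) x]
  congr 1 with y
  rw [show (fun ω : ℕ → ℤ => ω 0) ⁻¹' {y} = {ω | ω 0 = y} from rfl, map_shift_restrict,
    Measure.smul_apply, smul_eq_mul]

lemma transition_tsum (F : ℕ → ℤ → ℝ≥0∞) (x : ℤ) :
    c.transition (fun y => ∑' t, F t y) x = ∑' t, c.transition (F t) x := by
  simp only [transition, ENNReal.tsum_add, ENNReal.tsum_mul_left]

lemma transition_sum (s : Finset ℕ) (F : ℕ → ℤ → ℝ≥0∞) (x : ℤ) :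
    c.transition (fun y => ∑ t ∈ s, F t y) x = ∑ t ∈ s, c.transition (F t) x := by
  simp only [transition, Finset.sum_add_distrib, Finset.mul_sum]

/-- Only the states of `⟦b, x + 1⟧` matter, since `q b = 0`. -/
lemma transition_mono {F G : ℤ → ℝ≥0∞} {x : ℤ} (hbx : b ≤ x)
    (hFG : ∀ y, b ≤ y → y ≤ x + 1 → F y ≤ G y) : c.transition F x ≤ c.transition G x := by
  unfold transition
  gcongr _ * ?_ + ?_ + _ * ?_
  · exact hFG _ (by omega) le_rfl
  · rcases hbx.eq_or_lt with rfl | hbx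
    · simp [c.q_zero _ (Or.inl le_rfl)]
    · exact mul_le_mul_right (hFG _ (by omega) (by omega)) _
  · exact hFG _ hbx (by omega)

lemma law_avoidUntil_zero {x n : ℤ} (hxn : x ≠ n) : c.law x (avoidUntil n 0) = 1 :=
  le_antisymm prob_le_one <| c.init x ▸ measure_mono fun ω (hω : ω 0 = x) i hi => by
    rw [Nat.le_zero.1 hi, hω]; exact hxn

lemma law_avoidUntil_self (n : ℤ) (t : ℕ) : c.law n (avoidUntil n t) = 0 :=
  measure_mono_null (fun _ hω h0 => hω 0 t.zero_le h0) (c.law_compl_setOf_apply_zero n)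

lemma law_avoidUntil_succ {x n : ℤ} (hxn : x ≠ n) (t : ℕ) :
    c.law x (avoidUntil n (t + 1)) = c.transition (fun y => c.law y (avoidUntil n t)) x := by
  rw [avoidUntil_succ, Set.inter_comm, measure_inter_conull, law_preimage_shift _ _
    (measurableSet_avoidUntil n t)]
  exact measure_mono_null (fun ω (hω : ¬ ω 0 ≠ n) (h0 : ω 0 = x) => hxn (h0 ▸ not_not.1 hω))
    (c.law_compl_setOf_apply_zero x)

lemma eT_eq_tsum (x n : ℤ) : c.eT x n = ∑' t, c.law x (avoidUntil n t) :=
  lintegral_hitTime_singleton _ _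

lemma eT_self (n : ℤ) : c.eT n n = 0 := by
  simp [eT_eq_tsum, law_avoidUntil_self]

theorem eT_eq_one_add_transition {x n : ℤ} (hxn : x ≠ n) :
    c.eT x n = 1 + c.transition (fun y => c.eT y n) x := by
  simp_rw [eT_eq_tsum, transition_tsum]
  rw [tsum_eq_zero_add' ENNReal.summable, c.law_avoidUntil_zero hxn]
  simp_rw [c.law_avoidUntil_succ hxn]

theorem eT_le_of_supersolution {n : ℤ} {Ψ : ℤ → ℝ≥0∞}
    (hΨ : ∀ x, b ≤ x → x < n → 1 + c.transition Ψ x ≤ Ψ x) {x : ℤ} (hbx : b ≤ x)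
    (hxn : x ≤ n) : c.eT x n ≤ Ψ x := by
  rw [eT_eq_tsum]
  refine ENNReal.tsum_le_of_sum_range_le fun t => ?_
  induction t generalizing x with
  | zero => simp
  | succ t ih =>
    rcases hxn.eq_or_lt with rfl | hxn
    · simp [law_avoidUntil_self]
    calc ∑ s ∈ Finset.range (t + 1), c.law x (avoidUntil n s)
        = 1 + c.transition (fun y => ∑ s ∈ Finset.range t, c.law y (avoidUntil n s)) x := by
          rw [Finset.sum_range_succ', c.law_avoidUntil_zero hxn.ne, add_comm, transition_sum]
          simp_rw [c.law_avoidUntil_succ hxn.ne]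
      _ ≤ 1 + c.transition Ψ x := by
          gcongr
          exact c.transition_mono hbx fun y hby hyx => ih hby (by omega)
      _ ≤ Ψ x := hΨ x hbx hxn

lemma toReal_transition {F : ℤ → ℝ≥0∞} {x : ℤ} (hbx : b ≤ x) (hxa : x ≤ a)
    (hF : c.transition F x ≠ ⊤) :
    (c.transition F x).toReal = c.p x * (F (x + 1)).toReal + c.q x * (F (x - 1)).toReal +
      (1 - c.p x - c.q x) * (F x).toReal := by
  unfold transition at hF ⊢
  obtain ⟨⟨hp, hq⟩, hr⟩ := ENNReal.add_ne_top.1 hF |>.imp_left ENNReal.add_ne_top.1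
  rw [ENNReal.toReal_add (ENNReal.add_ne_top.2 ⟨hp, hq⟩) hr, ENNReal.toReal_add hp hq]
  simp only [ENNReal.toReal_mul, ENNReal.toReal_ofReal (c.p_nonneg x),
    ENNReal.toReal_ofReal (c.q_nonneg x),
    ENNReal.toReal_ofReal (show 0 ≤ 1 - c.p x - c.q x by linarith [c.r_nonneg x hbx hxa])]

lemma firstStepEq_toReal_eT {n : ℤ} (hna : n ≤ a) (hfin : ∀ x, b ≤ x → x < n → c.eT x n ≠ ⊤) :
    FirstStepEq c.p c.q b n fun x => (c.eT x n).toReal := by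
  intro x hbx hxn
  dsimp only
  have h := c.eT_eq_one_add_transition hxn.ne
  have hT : c.transition (fun y => c.eT y n) x ≠ ⊤ :=
    ne_top_of_le_ne_top (hfin x hbx hxn) (h ▸ le_add_self)
  conv_lhs => rw [h, ENNReal.toReal_add ENNReal.one_ne_top hT,
    c.toReal_transition hbx (by omega) hT, ENNReal.toReal_one]
  ring

lemma one_add_transition_ofReal {n : ℤ} {F : ℤ → ℝ} (hF : FirstStepEq c.p c.q b n F)
    (hF₀ : ∀ x, 0 ≤ F x) (hna : n ≤ a) {x : ℤ} (hbx : b ≤ x) (hxn : x < n) :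
    1 + c.transition (fun y => ENNReal.ofReal (F y)) x = ENNReal.ofReal (F x) := by
  have hr : 0 ≤ 1 - c.p x - c.q x := by linarith [c.r_nonneg x hbx (by omega)]
  have hp := c.p_nonneg x
  have hq := c.q_nonneg x
  have hF₁ := hF₀ (x + 1)
  have hF₂ := hF₀ (x - 1)
  have hF₃ := hF₀ x
  rw [hF x hbx hxn, transition, ← ENNReal.ofReal_mul hp, ← ENNReal.ofReal_mul hq,
    ← ENNReal.ofReal_mul hr, ← ENNReal.ofReal_add (by positivity) (by positivity),
    ← ENNReal.ofReal_add (by positivity) (by positivity), ← ENNReal.ofReal_one,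
    ← ENNReal.ofReal_add zero_le_one (by positivity), ← add_assoc, ← add_assoc]

/-- For stationary `π` this is `E[T_{k→k+1}]`, the `k`-th summand of the theorem. -/
def meanUpTime (π : ℤ → ℝ) (k : ℤ) : ℝ := (∑ i ∈ Finset.Icc b k, π i) / (c.p k * π k)

variable {c} {π : ℤ → ℝ}

lemma IsStationary.nonneg (hπ : c.IsStationary π) (x : ℤ) : 0 ≤ π x := by
  by_cases hx : b ≤ x ∧ x ≤ a
  · exact (hπ.1 x hx.1 hx.2).le
  · rw [hπ.2.1 x (by omega)]

lemma IsStationary.meanUpTime_nonneg (hπ : c.IsStationary π) (k : ℤ) : 0 ≤ c.meanUpTime π k :=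
  div_nonneg (Finset.sum_nonneg fun i _ => hπ.nonneg i) (mul_nonneg (c.p_nonneg k) (hπ.nonneg k))

lemma IsStationary.p_mul_meanUpTime (hπ : c.IsStationary π) {k : ℤ} (hbk : b ≤ k) (hka : k < a) :
    c.p k * c.meanUpTime π k = 1 + c.q k * c.meanUpTime π (k - 1) := by
  have hpk := c.p_pos k hbk (by omega)
  have hπk := hπ.1 k hbk hka.le
  rw [meanUpTime, meanUpTime, ← Finset.sum_Ico_add_eq_sum_Icc hbk,
    ← Finset.Icc_sub_one_right_eq_Ico]
  rcases hbk.eq_or_lt with rfl | hbk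
  · rw [c.q_zero _ (Or.inl le_rfl), Finset.Icc_eq_empty (by omega)]
    field_simp
    ring
  · have hpk' := c.p_pos (k - 1) (by omega) (by omega)
    have hπk' := hπ.1 (k - 1) (by omega) (by omega)
    have hdb := hπ.2.2.2 k (by omega) hka.le
    field_simp
    linear_combination -(∑ i ∈ Finset.Icc b (k - 1), π i) * hdb

lemma IsStationary.firstStepEq_sum_meanUpTime (hπ : c.IsStationary π) {n : ℤ} (hna : n ≤ a) :
    FirstStepEq c.p c.q b n fun x => ∑ k ∈ Finset.Icc x (n - 1), c.meanUpTime π k := by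
  intro x hbx hxn
  have hsplit : ∀ y ≤ n - 1, ∑ k ∈ Finset.Icc y (n - 1), c.meanUpTime π k =
      c.meanUpTime π y + ∑ k ∈ Finset.Icc (y + 1) (n - 1), c.meanUpTime π k := fun y hy => by
    rw [Finset.Icc_add_one_left_eq_Ioc, Finset.add_sum_Ioc_eq_sum_Icc hy]
  have h₀ := hsplit x (by omega)
  have h₁ := hsplit (x - 1) (by omega)
  rw [sub_add_cancel] at h₁
  linear_combination c.p x * h₀ - c.q x * h₁ + hπ.p_mul_meanUpTime hbx (by omega)

end BDChain

theorem mean_hitting_time_up_general {b a : ℤ} (c : BDChain b a)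
    (π : ℤ → ℝ) (hπ : c.IsStationary π)
    (j n : ℤ) (hj : b ≤ j) (hjn : j < n) (hn : n ≤ a) :
    c.eT j n = ENNReal.ofReal
      (∑ k ∈ Finset.Icc j (n - 1), (∑ i ∈ Finset.Icc b k, π i) / (c.p k * π k)) := by
  set Φ : ℤ → ℝ := fun x => ∑ k ∈ Finset.Icc x (n - 1), c.meanUpTime π k
  have hΦ := hπ.firstStepEq_sum_meanUpTime hn
  have hΦ₀ : ∀ x, 0 ≤ Φ x := fun x => Finset.sum_nonneg fun k _ => hπ.meanUpTime_nonneg k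
  have hfin : ∀ x, b ≤ x → x ≤ n → c.eT x n ≠ ⊤ := fun x hbx hxn =>
    ne_top_of_le_ne_top ENNReal.ofReal_ne_top <| c.eT_le_of_supersolution
      (fun y hby hyn => (c.one_add_transition_ofReal hΦ hΦ₀ hn hby hyn).le) hbx hxn
  have hΦeT : Φ j = (c.eT j n).toReal :=
    hΦ.unique (c.firstStepEq_toReal_eT hn fun x hbx hxn => hfin x hbx hxn.le)
      (c.q_zero b (Or.inl le_rfl)) (fun x hbx hxn => (c.p_pos x hbx (by omega)).ne')
      (by simp [c.eT_self]) hj hjn.le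
  rw [← ENNReal.ofReal_toReal (hfin j hj hjn.le), ← hΦeT]
  rfl

/-- For an irreducible birth-and-death chain on `⟦b,a⟧` with
reversible invariant probability measure `π`, for all `b ≤ j < n ≤ a`:
`E[T_{j→n}] = Σ_{k=j}^{n-1} π(⟦b,k⟧) / (p_k π(k))`. -/
theorem mean_hitting_time_up {b a : ℤ} (hab : b < a) (c : BDChain b a)
    (π : ℤ → ℝ) (hπ : c.IsStationary π)
    (j n : ℤ) (hj : b ≤ j) (hjn : j < n) (hn : n ≤ a) :
    c.eT j n = ENNReal.ofReal
      (∑ k ∈ Finset.Icc j (n - 1), (∑ i ∈ Finset.Icc b k, π i) / (c.p k * π k)) :=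
  mean_hitting_time_up_general c π hπ j n hj hjn hn
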